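/- Isoperimetric-type bound for the symplectic area of closed rectifiable curves: let γ : [a,b] → ℝ^(2n) be a continuous closed curve (γ(a) = γ(b)) of finite length, i.e., with finite total variation ℓ(γ). Then the symplectic area S(γ) exists and |S(γ)| ≤ ℓ(γ)². -/

import Mathlib

open MeasureTheory Set Filter Topology
open scoped ENNReal

noncomputable section

/-- Euclidean space `ℝ^(2n)`. -/
abbrev E (n : ℕ) : Type := EuclideanSpace ℝ (Fin (2 * n))

/-- The standard symplectic form on `ℝ^(2n)` with coordinates `(x₁,y₁,…,xₙ,yₙ)`. -/
def omegaF (n : ℕ) (u v : E n) : ℝ :=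
  ∑ i : Fin n,
    (u ⟨2 * i.1, by have := i.isLt; omega⟩ * v ⟨2 * i.1 + 1, by have := i.isLt; omega⟩
     - v ⟨2 * i.1, by have := i.isLt; omega⟩ * u ⟨2 * i.1 + 1, by have := i.isLt; omega⟩)

/-- The discrete symplectic area `Ŝ(γ_P)` of `γ` along the partition
`t 0 < t 1 < … < t k`:  `½ ∑_i ω(γ(t_i), γ(t_{i+1}))`, which coincides with
`½ ∑_i ∑_j (x_j(γ(t_i)) y_j(γ(t_{i+1})) − y_j(γ(t_i)) x_j(γ(t_{i+1})))`. -/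
def SHat (n : ℕ) (γ : ℝ → E n) (k : ℕ) (t : Fin (k + 1) → ℝ) : ℝ :=
  (1 / 2) * ∑ i : Fin k, omegaF n (γ (t i.castSucc)) (γ (t i.succ))

/-- The symplectic area of `γ : [a,b] → ℝ^(2n)` exists and equals `L`: for every `ε > 0`
there is `δ > 0` such that every partition `a = t₀ < … < t_k = b` of mesh `< δ` satisfies
`|Ŝ(γ_P) − L| < ε`. -/
def IsSympArea (n : ℕ) (a b : ℝ) (γ : ℝ → E n) (L : ℝ) : Prop :=
  ∀ ε > (0 : ℝ), ∃ δ > (0 : ℝ), ∀ (k : ℕ) (t : Fin (k + 1) → ℝ),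
    t 0 = a → t (Fin.last k) = b →
    (∀ i : Fin k, t i.castSucc < t i.succ) →
    (∀ i : Fin k, t i.succ - t i.castSucc < δ) →
    |SHat n γ k t - L| < ε

/-!
Write `ω` for the symplectic form, so that `2 Ŝ(γ_P) = ∑ ω(γ(tᵢ), γ(tᵢ₊₁))`. Since `ω` is
alternating, `ω(p, q) + ω(q, r) - ω(p, r) = ω(q - p, r - q)`; telescoping this over a fan shows
that replacing the chord over a step `[x, y]` of a partition by a finer polygon changes the sum
by at most `‖ω‖ · sup ‖γ(s) - γ(x)‖ · (length of the finer polygon)`. For a fine mesh the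
oscillation is small by uniform continuity and the length is at most `ℓ(γ)`, so any two fine
partitions give almost the same sum as their common refinement: the sums are Cauchy and `S(γ)`
exists. For a closed curve the fan from `γ(a)` over the whole partition has a degenerate closing
chord `ω(γ(a), γ(b)) = 0`, so `|2 Ŝ(γ_P)| ≤ ‖ω‖ ℓ(γ)²` with `‖ω‖ ≤ 1`.
-/

section SymplecticForm

variable {n : ℕ}

def xIndex (i : Fin n) : Fin (2 * n) := ⟨2 * i.1, by omega⟩
def yIndex (i : Fin n) : Fin (2 * n) := ⟨2 * i.1 + 1, by omega⟩

lemma omegaF_eq_sum (u v : E n) :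
    omegaF n u v = ∑ i, (u (xIndex i) * v (yIndex i) - v (xIndex i) * u (yIndex i)) := rfl

lemma sum_eq_sum_pairs {M : Type*} [AddCommMonoid M] (g : Fin (2 * n) → M) :
    ∑ j, g j = ∑ i : Fin n, (g (xIndex i) + g (yIndex i)) := by
  rw [← (finProdFinEquiv.trans (finCongr (Nat.mul_comm n 2))).sum_comp, Fintype.sum_prod_type]
  refine Finset.sum_congr rfl fun i _ => ?_
  rw [Fin.sum_univ_two]
  congr 2 <;> ext <;> simp [xIndex, yIndex, add_comm]

lemma norm_sq_eq_sum_pairs (u : E n) : ‖u‖ ^ 2 = ∑ i, (u (xIndex i) ^ 2 + u (yIndex i) ^ 2) := by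
  rw [EuclideanSpace.norm_sq_eq, sum_eq_sum_pairs]
  simp

/-- Cauchy–Schwarz: `omegaF n u v` is the dot product of `(xᵢ(u), yᵢ(u))ᵢ` with the rotated
vector `(yᵢ(v), -xᵢ(v))ᵢ`. -/
lemma abs_omegaF_le (u v : E n) : |omegaF n u v| ≤ ‖u‖ * ‖v‖ := by
  have h := Finset.sum_mul_sq_le_sq_mul_sq Finset.univ
    (Sum.elim (fun i => u (xIndex i)) (fun i => u (yIndex i)))
    (Sum.elim (fun i => v (yIndex i)) (fun i => -v (xIndex i)))
  simp only [Fintype.sum_sum_type, Sum.elim_inl, Sum.elim_inr, ← Finset.sum_add_distrib] at h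
  have hsq : omegaF n u v ^ 2 ≤ (‖u‖ * ‖v‖) ^ 2 := by
    rw [mul_pow, norm_sq_eq_sum_pairs, norm_sq_eq_sum_pairs, omegaF_eq_sum]
    refine (Eq.le ?_).trans (h.trans_eq ?_) <;> congr 1 <;>
      exact Finset.sum_congr rfl fun i _ => by ring
  exact abs_le_of_sq_le_sq hsq (by positivity)

def symplecticForm (n : ℕ) : E n →L[ℝ] E n →L[ℝ] ℝ := by
  refine LinearMap.mkContinuous₂ (LinearMap.mk₂ ℝ (omegaF n) ?_ ?_ ?_ ?_) 1 fun u v => ?_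
  iterate 4
    intros
    simp only [omegaF_eq_sum, PiLp.add_apply, PiLp.smul_apply, smul_eq_mul, Finset.mul_sum,
      ← Finset.sum_add_distrib]
    exact Finset.sum_congr rfl fun _ _ => by ring
  simpa [mul_assoc] using abs_omegaF_le u v

@[simp] lemma symplecticForm_apply (u v : E n) : symplecticForm n u v = omegaF n u v := rfl

lemma symplecticForm_self (u : E n) : symplecticForm n u u = 0 := by
  simp [omegaF]

lemma norm_symplecticForm_le : ‖symplecticForm n‖ ≤ 1 :=
  LinearMap.mkContinuous₂_norm_le _ zero_le_one _

end SymplecticForm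

section Polygon

variable {F : Type*} [SeminormedAddCommGroup F]

def polygonLength : List F → ℝ
  | p :: q :: l => ‖q - p‖ + polygonLength (q :: l)
  | _ => 0

@[simp] lemma polygonLength_nil : polygonLength ([] : List F) = 0 := rfl
@[simp] lemma polygonLength_singleton (p : F) : polygonLength [p] = 0 := rfl
@[simp] lemma polygonLength_cons_cons (p q : F) (l : List F) :
    polygonLength (p :: q :: l) = ‖q - p‖ + polygonLength (q :: l) := rfl

lemma polygonLength_nonneg : ∀ l : List F, 0 ≤ polygonLength l
  | [] | [_] => le_rfl
  | _ :: q :: l => add_nonneg (norm_nonneg _) (polygonLength_nonneg (q :: l))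

lemma polygonLength_le_cons (p : F) : ∀ l : List F, polygonLength l ≤ polygonLength (p :: l)
  | [] => le_rfl
  | _ :: _ => le_add_of_nonneg_left (norm_nonneg _)

lemma polygonLength_append (p : F) (l₂ : List F) : ∀ l₁ : List F,
    polygonLength (l₁ ++ p :: l₂) = polygonLength (l₁ ++ [p]) + polygonLength (p :: l₂)
  | [] | [_] => by simp
  | x :: y :: l₁ => by
    simp only [List.cons_append, polygonLength_cons_cons] 
    rw [← List.cons_append, polygonLength_append p l₂ (y :: l₁)]
    simp only [List.cons_append]
    ring

variable [NormedSpace ℝ F] (B : F →L[ℝ] F →L[ℝ] ℝ)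

/-- For the symplectic form, `B p q / 2` is the signed area of the triangle `0 p q`; hence the
factor `1 / 2` relating this sum to `SHat`. -/
def polygonArea : List F → ℝ
  | p :: q :: l => B p q + polygonArea (q :: l)
  | _ => 0

@[simp] lemma polygonArea_singleton (p : F) : polygonArea B [p] = 0 := rfl
@[simp] lemma polygonArea_cons_cons (p q : F) (l : List F) :
    polygonArea B (p :: q :: l) = B p q + polygonArea B (q :: l) := rfl

lemma polygonArea_append (p : F) (l₂ : List F) : ∀ l₁ : List F,
    polygonArea B (l₁ ++ p :: l₂) = polygonArea B (l₁ ++ [p]) + polygonArea B (p :: l₂)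
  | [] | [_] => by simp
  | x :: y :: l₁ => by
    simp only [List.cons_append, polygonArea_cons_cons] 
    rw [← List.cons_append, polygonArea_append p l₂ (y :: l₁)]
    simp only [List.cons_append]
    ring

variable {B}

lemma polygonArea_replicate (hB : ∀ u, B u u = 0) (p : F) :
    ∀ m : ℕ, polygonArea B (List.replicate m p) = 0
  | 0 | 1 => rfl
  | m + 2 => by
    rw [List.replicate_succ, List.replicate_succ, polygonArea_cons_cons, hB, ← List.replicate_succ,
      polygonArea_replicate hB p (m + 1), add_zero]

lemma apply_add_apply_sub_apply (hB : ∀ u, B u u = 0) (p q r : F) :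
    B p q + B q r - B p r = B (q - p) (r - q) := by
  simp only [map_sub, sub_apply, hB]
  ring

/-- Cutting a corner `p q r` changes the area by `B (q - p) (r - q)`; summed over a fan from `p`
this compares the polygon `p :: l` with its closing chord. -/
lemma abs_polygonArea_cons_sub_le (hB : ∀ u, B u u = 0) {p : F} {c : ℝ} :
    ∀ {l : List F}, (∀ q ∈ l, ‖q - p‖ ≤ c) →
      |polygonArea B (p :: l) - B p (l.getLastD p)| ≤ ‖B‖ * c * polygonLength l
  | [], _ => by simp [hB]
  | [q], _ => by simp
  | q :: r :: l, hc => by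
    have ih := abs_polygonArea_cons_sub_le hB (l := r :: l) fun s hs => hc s (by simp [hs])
    have hcorner : |B (q - p) (r - q)| ≤ ‖B‖ * c * ‖r - q‖ :=
      (B.le_opNorm₂ _ _).trans <| by
        gcongr
        exact hc q (by simp)
    have hsplit : polygonArea B (p :: q :: r :: l) - B p ((q :: r :: l).getLastD p) =
        B (q - p) (r - q) + (polygonArea B (p :: r :: l) - B p ((r :: l).getLastD p)) := by
      rw [← apply_add_apply_sub_apply hB]
      simp only [polygonArea_cons_cons, List.getLastD_cons]
      ring
    rw [hsplit, polygonLength_cons_cons, mul_add]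
    exact (abs_add_le _ _).trans (add_le_add hcorner ih)

lemma abs_polygonArea_cons_append_sub_le (hB : ∀ u, B u u = 0) {p r : F} {c : ℝ} {l : List F}
    (hc : ∀ q ∈ l ++ [r], ‖q - p‖ ≤ c) :
    |polygonArea B (p :: (l ++ [r])) - B p r| ≤ ‖B‖ * c * polygonLength (p :: (l ++ [r])) := by
  have h := abs_polygonArea_cons_sub_le hB hc
  rw [List.getLastD_concat] at h
  have hc₀ : 0 ≤ c := (norm_nonneg _).trans (hc r (by simp))
  exact h.trans (by gcongr; exact polygonLength_le_cons _ _)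

lemma polygonArea_ofFn : ∀ {k : ℕ} (p : Fin (k + 1) → F),
    polygonArea B (List.ofFn p) = ∑ i : Fin k, B (p i.castSucc) (p i.succ)
  | 0, _ => by simp
  | k + 1, p => by
    have ih := polygonArea_ofFn fun i => p i.succ
    rw [List.ofFn_succ] at ih
    rw [List.ofFn_succ, List.ofFn_succ, polygonArea_cons_cons, ih, Fin.sum_univ_succ]
    rfl

end Polygon

section Partition

/-- Repeated times are allowed, so that sorting the concatenation of two partitions gives a common
refinement. -/
def IsSortedPartition (a b : ℝ) (l : List ℝ) : Prop :=
  l.Pairwise (· ≤ ·) ∧ l.head? = some a ∧ l.getLast? = some b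

namespace IsSortedPartition

variable {a b : ℝ} {l : List ℝ}

lemma mem_Icc (hl : IsSortedPartition a b l) {s : ℝ} (hs : s ∈ l) : s ∈ Icc a b := by
  obtain ⟨hsort, hhead, hlast⟩ := hl
  have hne := List.ne_nil_of_mem hs
  rw [List.head?_eq_some_head hne, Option.some_inj] at hhead
  rw [List.getLast?_eq_some_getLast hne, Option.some_inj] at hlast
  exact ⟨hhead ▸ hsort.rel_head hs, hlast ▸ hsort.rel_getLast hs⟩

lemma of_mem (hsort : l.Pairwise (· ≤ ·)) (ha : a ∈ l) (hb : b ∈ l) (hl : ∀ s ∈ l, s ∈ Icc a b) :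
    IsSortedPartition a b l := by
  have hne := List.ne_nil_of_mem ha
  refine ⟨hsort, ?_, ?_⟩
  · rw [List.head?_eq_some_head hne]
    exact congrArg some (le_antisymm (hsort.rel_head ha) (hl _ (List.head_mem hne)).1)
  · rw [List.getLast?_eq_some_getLast hne]
    exact congrArg some (le_antisymm (hl _ (List.getLast_mem hne)).2 (hsort.rel_getLast hb))

lemma exists_common_refinement {l' : List ℝ} (hl : IsSortedPartition a b l)
    (hl' : IsSortedPartition a b l') :
    ∃ m, IsSortedPartition a b m ∧ l.Sublist m ∧ l'.Sublist m := by
  refine ⟨(l ++ l').insertionSort (· ≤ ·), of_mem (List.pairwise_insertionSort _ _) ?_ ?_ ?_,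
    List.sublist_insertionSort hl.1 (List.sublist_append_left _ _),
    List.sublist_insertionSort hl'.1 (List.sublist_append_right _ _)⟩
  · simpa using Or.inl (List.mem_of_mem_head? hl.2.1)
  · simpa using Or.inl (List.mem_of_getLast? hl.2.2)
  · simp only [List.mem_insertionSort, List.mem_append]
    rintro s (hs | hs)
    exacts [hl.mem_Icc hs, hl'.mem_Icc hs]

end IsSortedPartition

variable {F : Type*} [SeminormedAddCommGroup F] {γ : ℝ → F}

lemma ofReal_polygonLength_map_le_eVariationOn {s : Set ℝ} :
    ∀ {l : List ℝ}, l.Pairwise (· ≤ ·) → (∀ t ∈ l, t ∈ s) →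
      ENNReal.ofReal (polygonLength (l.map γ)) ≤ eVariationOn γ s
  | [], _, _ | [_], _, _ => by simp
  | x :: y :: l, hl, hs => by
    have hxy : x ≤ y := List.rel_of_pairwise_cons hl (by simp)
    have hx : x ∈ s := hs x (by simp)
    have hy : y ∈ s := hs y (by simp)
    have ih := ofReal_polygonLength_map_le_eVariationOn (s := s ∩ Ici y) hl.of_cons
      fun t ht => ⟨hs t (List.mem_cons_of_mem _ ht),
        (List.mem_cons.1 ht).elim ge_of_eq (List.rel_of_pairwise_cons hl.of_cons)⟩
    calc ENNReal.ofReal (polygonLength ((x :: y :: l).map γ))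
        ≤ ENNReal.ofReal (‖γ y - γ x‖) + ENNReal.ofReal (polygonLength ((y :: l).map γ)) :=
          ENNReal.ofReal_add_le
      _ ≤ eVariationOn γ (s ∩ Icc x y) + eVariationOn γ (s ∩ Ici y) := by
          rw [← dist_eq_norm, ← edist_dist]
          exact add_le_add (eVariationOn.edist_le γ ⟨hy, hxy, le_rfl⟩ ⟨hx, le_rfl, hxy⟩) ih
      _ ≤ eVariationOn γ (s ∩ Icc x y ∪ s ∩ Ici y) :=
          eVariationOn.add_le_union γ fun u hu v hv => hu.2.2.trans hv.2
      _ ≤ eVariationOn γ s := eVariationOn.mono γ (union_subset inter_subset_left inter_subset_left)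

lemma IsSortedPartition.polygonLength_map_le {a b : ℝ} {l : List ℝ}
    (hl : IsSortedPartition a b l) (hlen : eVariationOn γ (Icc a b) ≠ ⊤) :
    polygonLength (l.map γ) ≤ (eVariationOn γ (Icc a b)).toReal :=
  (ENNReal.ofReal_le_iff_le_toReal hlen).1 <|
    ofReal_polygonLength_map_le_eVariationOn hl.1 fun _ => hl.mem_Icc

end Partition

section Refinement

lemma List.exists_eq_append_cons_of_cons_sublist {α : Type*} {y : α} {l m : List α}
    (h : (y :: l).Sublist m) : ∃ A B, m = A ++ y :: B ∧ l.Sublist B := by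
  obtain ⟨r₁, r₂, rfl, hy, hl⟩ := List.cons_sublist_iff.1 h
  obtain ⟨A, C, rfl⟩ := List.append_of_mem hy
  exact ⟨A, C ++ r₂, by simp, hl.trans (List.sublist_append_right C r₂)⟩

variable {F : Type*} [SeminormedAddCommGroup F] [NormedSpace ℝ F] {B : F →L[ℝ] F →L[ℝ] ℝ}
  {γ : ℝ → F} {δ c : ℝ}

lemma abs_polygonArea_map_cons_append_sub_le (hB : ∀ u, B u u = 0) {x y : ℝ} {A : List ℝ}
    (hsort : (x :: (A ++ [y])).Pairwise (· ≤ ·)) (hxy : y - x < δ)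
    (hγ : ∀ s ∈ A ++ [y], dist s x < δ → dist (γ s) (γ x) ≤ c) :
    |polygonArea B (γ x :: (A.map γ ++ [γ y])) - B (γ x) (γ y)| ≤
      ‖B‖ * c * polygonLength (γ x :: (A.map γ ++ [γ y])) := by
  refine abs_polygonArea_cons_append_sub_le hB fun q hq => ?_
  obtain ⟨s, hs, rfl⟩ : ∃ s ∈ A ++ [y], γ s = q := List.mem_map.1 (by simpa using hq)
  have hxs : x ≤ s := List.rel_of_pairwise_cons hsort hs
  have hsy : s ≤ y := by
    rcases List.mem_append.1 hs with hs | hs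
    · exact (List.pairwise_append.1 hsort.of_cons).2.2 s hs y (List.mem_singleton_self y)
    · exact (List.mem_singleton.1 hs).le
  rw [← dist_eq_norm]
  exact hγ s hs (by rw [Real.dist_eq, abs_of_nonneg (sub_nonneg.2 hxs)]; linarith)

lemma abs_polygonArea_map_sub_le_of_sublist (hB : ∀ u, B u u = 0) (hc : 0 ≤ c) :
    ∀ {a b : ℝ} {l l' : List ℝ}, IsSortedPartition a b l → IsSortedPartition a b l' →
      l.Sublist l' → l.IsChain (fun s t => t - s < δ) →
      (∀ s ∈ l', ∀ t ∈ l', dist s t < δ → dist (γ s) (γ t) ≤ c) →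
      |polygonArea B (l'.map γ) - polygonArea B (l.map γ)| ≤ ‖B‖ * c * polygonLength (l'.map γ)
  | _, _, [], _, hl, _, _, _, _ => by simp [IsSortedPartition] at hl
  | a, b, [x], l', hl, hl', _, _, _ => by
    obtain ⟨rfl, rfl⟩ : x = a ∧ x = b := by simpa [IsSortedPartition] using hl
    have hconst : l' = List.replicate l'.length x :=
      List.eq_replicate_of_mem fun s hs => le_antisymm (hl'.mem_Icc hs).2 (hl'.mem_Icc hs).1
    rw [hconst, List.map_replicate, polygonArea_replicate hB]
    simpa using mul_nonneg (mul_nonneg (norm_nonneg B) hc) (polygonLength_nonneg _)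
  | a, b, x :: y :: l, l', hl, hl', hsub, hmesh, hγ => by
    obtain ⟨U, rfl⟩ : ∃ U, l' = x :: U :=
      List.head?_eq_some_iff.1 (hl'.2.1.trans hl.2.1.symm)
    obtain ⟨A, C, rfl, hlC⟩ :=
      List.exists_eq_append_cons_of_cons_sublist (List.cons_sublist_cons.1 hsub)
    have hsort := hl'.1
    have hfan := abs_polygonArea_map_cons_append_sub_le (γ := γ) hB
      (hsort.sublist (List.cons_sublist_cons.2 ((List.nil_sublist C).cons_cons y |>.append_left A)))
      hmesh.rel fun s hs hsx => hγ s (by simp only [List.mem_cons, List.mem_append] at hs ⊢; tauto)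
        x (by simp) hsx
    have hrest := abs_polygonArea_map_sub_le_of_sublist hB hc (a := y) (b := b)
      (l := y :: l) (l' := y :: C) ⟨hl.1.of_cons, rfl, by simpa using hl.2.2⟩
      ⟨hsort.of_cons.sublist (List.sublist_append_right _ _), rfl,
        (List.getLast?_append_cons (x :: A) y C).symm.trans hl'.2.2⟩
      (List.cons_sublist_cons.2 hlC) hmesh.tail
      fun s hs t ht => hγ s (by simp_all) t (by simp_all)
    simp only [List.map_cons, List.map_append] at hrest ⊢
    rw [polygonArea_cons_cons,
      show γ x :: (A.map γ ++ γ y :: C.map γ) = (γ x :: A.map γ) ++ γ y :: C.map γ from rfl,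
      polygonArea_append, polygonLength_append, mul_add]
    calc _ = |(polygonArea B (γ x :: A.map γ ++ [γ y]) - B (γ x) (γ y)) +
          (polygonArea B (γ y :: C.map γ) - polygonArea B (γ y :: l.map γ))| := by
          congr 1; ring
      _ ≤ _ := (abs_add_le _ _).trans (add_le_add hfan hrest)

end Refinement

section Estimates

variable {F : Type*} [SeminormedAddCommGroup F] [NormedSpace ℝ F] {B : F →L[ℝ] F →L[ℝ] ℝ}
  {γ : ℝ → F} {a b : ℝ}

lemma abs_polygonArea_map_sub_le {δ c : ℝ} {l l' : List ℝ} (hB : ∀ u, B u u = 0) (hc : 0 ≤ c)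
    (hlen : eVariationOn γ (Icc a b) ≠ ⊤)
    (hγ : ∀ s ∈ Icc a b, ∀ t ∈ Icc a b, dist s t < δ → dist (γ s) (γ t) ≤ c)
    (hl : IsSortedPartition a b l) (hl' : IsSortedPartition a b l')
    (hmesh : l.IsChain (fun s t => t - s < δ)) (hmesh' : l'.IsChain (fun s t => t - s < δ)) :
    |polygonArea B (l.map γ) - polygonArea B (l'.map γ)| ≤
      2 * ‖B‖ * c * (eVariationOn γ (Icc a b)).toReal := by
  obtain ⟨m, hm, hlm, hl'm⟩ := hl.exists_common_refinement hl'
  have hγm : ∀ s ∈ m, ∀ t ∈ m, dist s t < δ → dist (γ s) (γ t) ≤ c :=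
    fun s hs t ht => hγ s (hm.mem_Icc hs) t (hm.mem_Icc ht)
  have h := abs_polygonArea_map_sub_le_of_sublist hB hc hl hm hlm hmesh hγm
  have h' := abs_polygonArea_map_sub_le_of_sublist hB hc hl' hm hl'm hmesh' hγm
  have hlenm : ‖B‖ * c * polygonLength (m.map γ) ≤
      ‖B‖ * c * (eVariationOn γ (Icc a b)).toReal := by
    gcongr
    exact hm.polygonLength_map_le hlen
  rw [abs_sub_comm] at h
  linarith [abs_sub_le (polygonArea B (l.map γ)) (polygonArea B (m.map γ))
    (polygonArea B (l'.map γ))]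

lemma exists_forall_abs_polygonArea_map_sub_le (hB : ∀ u, B u u = 0)
    (hcont : ContinuousOn γ (Icc a b)) (hlen : eVariationOn γ (Icc a b) ≠ ⊤) {ε : ℝ}
    (hε : 0 < ε) :
    ∃ δ > 0, ∀ {l l' : List ℝ}, IsSortedPartition a b l → IsSortedPartition a b l' →
      l.IsChain (fun s t => t - s < δ) → l'.IsChain (fun s t => t - s < δ) →
      |polygonArea B (l.map γ) - polygonArea B (l'.map γ)| ≤ ε := by
  set L := (eVariationOn γ (Icc a b)).toReal
  have hK : 0 < 2 * ‖B‖ * L + 1 := by positivity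
  obtain ⟨δ, hδ, hγ⟩ := Metric.uniformContinuousOn_iff.1
    (isCompact_Icc.uniformContinuousOn_of_continuous hcont) (ε / (2 * ‖B‖ * L + 1))
    (by positivity)
  refine ⟨δ, hδ, fun hl hl' hmesh hmesh' => (abs_polygonArea_map_sub_le hB (by positivity) hlen
    (fun s hs t ht hst => (hγ s hs t ht hst).le) hl hl' hmesh hmesh').trans ?_⟩
  rw [show 2 * ‖B‖ * (ε / (2 * ‖B‖ * L + 1)) * L = ε * (2 * ‖B‖ * L / (2 * ‖B‖ * L + 1)) by ring]
  exact mul_le_of_le_one_right hε.le ((div_le_one hK).2 (by linarith))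

/-- For a closed curve the closing chord of the fan from `γ a` is degenerate. -/
lemma abs_polygonArea_map_le_of_closed (hB : ∀ u, B u u = 0) (hclosed : γ a = γ b)
    (hlen : eVariationOn γ (Icc a b) ≠ ⊤) {l : List ℝ} (hl : IsSortedPartition a b l) :
    |polygonArea B (l.map γ)| ≤ ‖B‖ * (eVariationOn γ (Icc a b)).toReal ^ 2 := by
  set L := (eVariationOn γ (Icc a b)).toReal
  obtain ⟨l₀, rfl⟩ := List.head?_eq_some_iff.1 hl.2.1
  have hend : (l₀.map γ).getLastD (γ a) = γ a := by
    have : l₀.getLastD a = b := by simpa [List.getLast?_cons] using hl.2.2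
    rw [List.getLastD_map, this, hclosed]
  have hclose : ∀ q ∈ l₀.map γ, ‖q - γ a‖ ≤ L := by
    simp only [List.mem_map]
    rintro _ ⟨s, hs, rfl⟩
    rw [← dist_eq_norm]
    exact BoundedVariationOn.dist_le hlen (hl.mem_Icc (by simp [hs])) (hl.mem_Icc (by simp))
  have h := abs_polygonArea_cons_sub_le hB hclose
  rw [hend, hB, sub_zero] at h
  calc |polygonArea B ((a :: l₀).map γ)| ≤ ‖B‖ * L * polygonLength (l₀.map γ) := h
    _ ≤ ‖B‖ * L * L := by
      gcongr
      exact (polygonLength_le_cons _ _).trans (hl.polygonLength_map_le hlen)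
    _ = ‖B‖ * L ^ 2 := by ring

end Estimates

section SympArea

def IsPartition (a b : ℝ) (k : ℕ) (t : Fin (k + 1) → ℝ) : Prop :=
  t 0 = a ∧ t (Fin.last k) = b ∧ ∀ i : Fin k, t i.castSucc < t i.succ

def IsFinePartition (a b δ : ℝ) (k : ℕ) (t : Fin (k + 1) → ℝ) : Prop :=
  IsPartition a b k t ∧ ∀ i : Fin k, t i.succ - t i.castSucc < δ

variable {n k : ℕ} {a b δ : ℝ} {t : Fin (k + 1) → ℝ} {γ : ℝ → E n}

lemma isSympArea_iff {L : ℝ} : IsSympArea n a b γ L ↔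
    ∀ ε > 0, ∃ δ > 0, ∀ k t, IsFinePartition a b δ k t → |SHat n γ k t - L| < ε := by
  simp only [IsSympArea, IsFinePartition, IsPartition, and_imp]

lemma IsPartition.isSortedPartition (ht : IsPartition a b k t) :
    IsSortedPartition a b (List.ofFn t) := by
  obtain ⟨h0, hk, hstep⟩ := ht
  refine ⟨List.pairwise_ofFn.2 fun i j hij => (Fin.strictMono_iff_lt_succ.2 hstep hij).le, ?_, ?_⟩
  · rw [List.ofFn_succ, List.head?_cons, h0]
  · rw [List.getLast?_eq_some_getLast (by simp), List.getLast_ofFn, ← hk]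
    rfl

lemma IsFinePartition.isChain (ht : IsFinePartition a b δ k t) :
    (List.ofFn t).IsChain (fun s u => u - s < δ) :=
  List.isChain_ofFn.2 fun i hi => ht.2 ⟨i, by omega⟩

lemma IsFinePartition.mono {δ' : ℝ} (ht : IsFinePartition a b δ k t) (h : δ ≤ δ') :
    IsFinePartition a b δ' k t :=
  ⟨ht.1, fun i => (ht.2 i).trans_le h⟩

lemma exists_isFinePartition (hab : a < b) (hδ : 0 < δ) : ∃ k t, IsFinePartition a b δ k t := by
  obtain ⟨k, hk⟩ := exists_nat_gt ((b - a) / δ)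
  set h := (b - a) / (k + 1)
  have hpos : 0 < h := by have := sub_pos.2 hab; positivity
  have hlt : h < δ := by
    rw [div_lt_iff₀ hδ] at hk
    rw [div_lt_iff₀ (by positivity)]
    linarith
  refine ⟨k + 1, fun i => a + i * h, ⟨by simp, ?_, fun i => ?_⟩, fun i => ?_⟩
  · simp only [Fin.val_last, Nat.cast_add, Nat.cast_one, h]
    field_simp
    ring
  all_goals simp only [Fin.val_succ, Fin.val_castSucc, Nat.cast_add, Nat.cast_one]; linarith

lemma SHat_eq_polygonArea :
    SHat n γ k t = polygonArea (symplecticForm n) ((List.ofFn t).map γ) / 2 := by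
  rw [List.map_ofFn, polygonArea_ofFn, SHat]
  simp only [Function.comp_apply, symplecticForm_apply]
  ring

lemma exists_isSympArea_of_cauchy (hab : a < b)
    (h : ∀ ε > 0, ∃ δ > 0, ∀ k t k' t', IsFinePartition a b δ k t → IsFinePartition a b δ k' t' →
      |SHat n γ k t - SHat n γ k' t'| ≤ ε) :
    ∃ S, IsSympArea n a b γ S := by
  choose k t ht using fun m : ℕ => exists_isFinePartition hab (Nat.one_div_pos_of_nat (n := m))
  have hfine : ∀ δ > 0, ∀ᶠ m in atTop, IsFinePartition a b δ (k m) (t m) := fun δ hδ => by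
    filter_upwards [tendsto_one_div_add_atTop_nhds_zero_nat.eventually (gt_mem_nhds hδ)] with m hm
    exact (ht m).mono hm.le
  have hcauchy : CauchySeq fun m => SHat n γ (k m) (t m) := by
    refine Metric.cauchySeq_iff'.2 fun ε hε => ?_
    obtain ⟨δ, hδ, hSHat⟩ := h (ε / 2) (half_pos hε)
    obtain ⟨N, hN⟩ := (hfine δ hδ).exists_forall_of_atTop
    exact ⟨N, fun m hm => (hSHat _ _ _ _ (hN m hm) (hN N le_rfl)).trans_lt (half_lt_self hε)⟩
  obtain ⟨S, hS⟩ := cauchySeq_tendsto_of_complete hcauchy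
  refine ⟨S, isSympArea_iff.2 fun ε hε => ?_⟩
  obtain ⟨δ, hδ, hSHat⟩ := h (ε / 2) (half_pos hε)
  refine ⟨δ, hδ, fun k' t' ht' => ?_⟩
  obtain ⟨m, hm, hmS⟩ :=
    ((hfine δ hδ).and (hS.eventually (Metric.ball_mem_nhds S (half_pos hε)))).exists
  calc |SHat n γ k' t' - S|
      ≤ |SHat n γ k' t' - SHat n γ (k m) (t m)| + |SHat n γ (k m) (t m) - S| := abs_sub_le _ _ _
    _ < ε / 2 + ε / 2 := add_lt_add_of_le_of_lt (hSHat _ _ _ _ ht' hm) hmS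
    _ = ε := add_halves ε

lemma IsSympArea.abs_le {S M : ℝ} (hab : a < b) (hS : IsSympArea n a b γ S)
    (hM : ∀ k t, IsPartition a b k t → |SHat n γ k t| ≤ M) : |S| ≤ M := by
  refine le_of_forall_pos_lt_add fun ε hε => ?_
  obtain ⟨δ, hδ, hSδ⟩ := isSympArea_iff.1 hS ε hε
  obtain ⟨k, t, ht⟩ := exists_isFinePartition hab hδ
  have := abs_sub_abs_le_abs_sub S (SHat n γ k t)
  rw [abs_sub_comm] at this
  linarith [hM k t ht.1, hSδ k t ht]

lemma exists_forall_abs_SHat_sub_le (hcont : ContinuousOn γ (Icc a b))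
    (hlen : eVariationOn γ (Icc a b) ≠ ⊤) :
    ∀ ε > 0, ∃ δ > 0, ∀ k t k' t', IsFinePartition a b δ k t → IsFinePartition a b δ k' t' →
      |SHat n γ k t - SHat n γ k' t'| ≤ ε := fun ε hε => by
  obtain ⟨δ, hδ, h⟩ := exists_forall_abs_polygonArea_map_sub_le symplecticForm_self hcont hlen hε
  refine ⟨δ, hδ, fun k t k' t' ht ht' => ?_⟩
  rw [SHat_eq_polygonArea, SHat_eq_polygonArea, ← sub_div, abs_div, abs_two]
  linarith [h ht.1.isSortedPartition ht'.1.isSortedPartition ht.isChain ht'.isChain]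

lemma abs_SHat_le_of_closed (hclosed : γ a = γ b) (hlen : eVariationOn γ (Icc a b) ≠ ⊤)
    (ht : IsPartition a b k t) : |SHat n γ k t| ≤ (eVariationOn γ (Icc a b)).toReal ^ 2 := by
  rw [SHat_eq_polygonArea, abs_div, abs_two]
  have h := abs_polygonArea_map_le_of_closed symplecticForm_self hclosed hlen ht.isSortedPartition
  have hL : 0 ≤ (eVariationOn γ (Icc a b)).toReal ^ 2 := by positivity
  nlinarith [norm_symplecticForm_le (n := n)]

end SympArea

theorem symp_area_isoperimetric_general (n : ℕ) (a b : ℝ) (hab : a < b)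
    (γ : ℝ → E n)
    (hcont : ContinuousOn γ (Icc a b))
    (hclosed : γ a = γ b)
    (hlen : eVariationOn γ (Icc a b) ≠ ⊤) :
    ∃ S : ℝ, IsSympArea n a b γ S ∧
      |S| ≤ (eVariationOn γ (Icc a b)).toReal ^ 2 := by
  obtain ⟨S, hS⟩ := exists_isSympArea_of_cauchy hab (exists_forall_abs_SHat_sub_le hcont hlen)
  exact ⟨S, hS, hS.abs_le hab fun k t ht => abs_SHat_le_of_closed hclosed hlen ht⟩

/-- **Isoperimetric-type bound for the symplectic area of closed rectifiable curves**
(Lemma 2.12(3)).  If `γ : [a,b] → ℝ^(2n)` is a continuous closed curve of finite length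
(total variation) `ℓ(γ)`, then the symplectic area `S(γ)` exists and `|S(γ)| ≤ ℓ(γ)²`. -/
theorem symp_area_isoperimetric (n : ℕ) (hn : 1 ≤ n) (a b : ℝ) (hab : a < b)
    (γ : ℝ → E n)
    (hcont : ContinuousOn γ (Icc a b))
    (hclosed : γ a = γ b)
    (hlen : eVariationOn γ (Icc a b) ≠ ⊤) :
    ∃ S : ℝ, IsSympArea n a b γ S ∧
      |S| ≤ (eVariationOn γ (Icc a b)).toReal ^ 2 :=
  symp_area_isoperimetric_general n a b hab γ hcont hclosed hlen
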